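/- arXiv:2405.09437 — 2 statements merged into one kernel-verified Lean document; each statement's English description precedes it below -/
import Mathlib

section
/- Let X be locally compact Hausdorff second countable with a countable basis 𝓑 of relatively compact open sets closed under finite unions. Then the family {⟨cl(U), V⟩ : U, V ∈ 𝓑} is a countable subbasis for the compact-open topology on the space of continuous partial functions with open domain from X to X. -/
open Set Topology Filter

/-- A continuous partial function from `X` to `Y` with open domain. -/
structure Cod (X Y : Type*) [TopologicalSpace X] [TopologicalSpace Y] where
  dom : Set X
  toFun : dom → Y
  isOpen_dom : IsOpen dom
  continuous_toFun : Continuous toFun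

namespace Cod

variable {X Y : Type*} [TopologicalSpace X] [TopologicalSpace Y]

/-- The image of a subset of `X` under a partial function. -/
def image (f : Cod X Y) (K : Set X) : Set Y := f.toFun '' ((↑) ⁻¹' K)

/-- The empty partial function. -/
def empty (X Y : Type*) [TopologicalSpace X] [TopologicalSpace Y] : Cod X Y where
  dom := ∅
  toFun := fun x => absurd x.2 (Set.notMem_empty _)
  isOpen_dom := isOpen_empty
  continuous_toFun := by
    rw [continuous_iff_continuousAt]
    rintro ⟨x, hx⟩
    exact absurd hx (Set.notMem_empty x)

end Cod

/-- The compact-open topology on `Cod X Y`, generated by the sets `⟨K,V⟩`. -/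
def codCO (X Y : Type*) [TopologicalSpace X] [TopologicalSpace Y] : TopologicalSpace (Cod X Y) :=
  TopologicalSpace.generateFrom
    {S | ∃ (K : Set X) (V : Set Y), IsCompact K ∧ IsOpen V ∧
      S = {f : Cod X Y | K ⊆ f.dom ∧ f.image K ⊆ V}}

namespace Cod

variable {X Y : Type*} [TopologicalSpace X] [TopologicalSpace Y]

/-- The subbasic set `⟨K, V⟩` of the compact-open topology. -/
def compactOpen (K : Set X) (V : Set Y) : Set (Cod X Y) :=
  {f | K ⊆ f.dom ∧ f.image K ⊆ V}

def preimage (f : Cod X Y) (V : Set Y) : Set X :=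
  Subtype.val '' (f.toFun ⁻¹' V)

theorem isOpen_preimage (f : Cod X Y) {V : Set Y} (hV : IsOpen V) : IsOpen (f.preimage V) :=
  f.isOpen_dom.isOpenMap_subtype_val _ (f.continuous_toFun.isOpen_preimage _ hV)

theorem mem_compactOpen_iff {f : Cod X Y} {K : Set X} {V : Set Y} :
    f ∈ compactOpen K V ↔ K ⊆ f.preimage V := by
  constructor
  · rintro ⟨hKdom, hKV⟩ x hx
    exact ⟨⟨x, hKdom hx⟩, hKV ⟨_, hx, rfl⟩, rfl⟩
  · intro h
    refine ⟨fun x hx => ?_, ?_⟩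
    · obtain ⟨y, -, rfl⟩ := h hx
      exact y.2
    · rintro _ ⟨y, hy, rfl⟩
      obtain ⟨z, hz, hzy⟩ := h hy
      rwa [← Subtype.ext hzy]

theorem compactOpen_empty (V : Set Y) : compactOpen (∅ : Set X) V = univ := by
  ext f
  simp [mem_compactOpen_iff]

theorem compactOpen_union (K L : Set X) (V : Set Y) :
    compactOpen (K ∪ L) V = compactOpen K V ∩ compactOpen L V := by
  ext f
  simp only [mem_inter_iff, mem_compactOpen_iff, union_subset_iff]

theorem compactOpen_anti {K L : Set X} {V W : Set Y} (hKL : K ⊆ L) (hVW : V ⊆ W) :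
    compactOpen L V ⊆ compactOpen K W := by
  intro f
  simp only [mem_compactOpen_iff]
  exact fun h => hKL.trans (h.trans (image_mono (preimage_mono hVW)))

theorem exists_mem_compactOpen_closure_basis [RegularSpace X] {B : Set (Set X)}
    {B' : Set (Set Y)} (hB : TopologicalSpace.IsTopologicalBasis B)
    (hB' : TopologicalSpace.IsTopologicalBasis B') {f : Cod X Y} {V : Set Y} (hV : IsOpen V)
    {x : X} (hx : x ∈ f.preimage V) :
    ∃ U ∈ B, ∃ V' ∈ B', closure U ∈ 𝓝 x ∧ f ∈ compactOpen (closure U) V' ∧ V' ⊆ V := by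
  obtain ⟨y, hyV, rfl⟩ := hx
  obtain ⟨V', hV', hyV', hV'V⟩ := hB'.exists_subset_of_mem_open hyV hV
  have hxV' : (y : X) ∈ f.preimage V' := ⟨y, hyV', rfl⟩
  obtain ⟨U, hU, hyU, hUV'⟩ :=
    hB.exists_closure_subset ((f.isOpen_preimage (hB'.isOpen hV')).mem_nhds hxV')
  exact ⟨U, hU, V', hV', mem_of_superset ((hB.isOpen hU).mem_nhds hyU) subset_closure,
    mem_compactOpen_iff.2 hUV', hV'V⟩

theorem codCO_eq_generateFrom_closure_basis [RegularSpace X] {B : Set (Set X)}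
    {B' : Set (Set Y)} (hB : TopologicalSpace.IsTopologicalBasis B)
    (hBc : ∀ U ∈ B, IsCompact (closure U)) (hB' : TopologicalSpace.IsTopologicalBasis B') :
    codCO X Y = TopologicalSpace.generateFrom
      {S | ∃ U ∈ B, ∃ V ∈ B', S = compactOpen (closure U) V} := by
  refine le_antisymm (TopologicalSpace.generateFrom_anti ?_) (le_generateFrom ?_)
  · rintro S ⟨U, hU, V, hV, rfl⟩
    exact ⟨closure U, V, hBc U hU, hB'.isOpen hV, rfl⟩
  let _ := TopologicalSpace.generateFrom
    {S : Set (Cod X Y) | ∃ U ∈ B, ∃ V ∈ B', S = compactOpen (closure U) V}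
  rintro S ⟨K, V, hK, hV, rfl⟩
  refine isOpen_iff_mem_nhds.2 fun f hf => ?_
  -- `L ↦ ⟨L, V⟩ ∈ 𝓝 f` is stable under subsets and finite unions, so compactness of `K`
  -- reduces it to small neighbourhoods of single points.
  refine hK.induction_on (p := fun L => compactOpen L V ∈ 𝓝 f) (by simp [compactOpen_empty])
    (fun L L' hLL' hL' => mem_of_superset hL' (compactOpen_anti hLL' le_rfl))
    (fun L L' hL hL' => by simpa only [compactOpen_union] using inter_mem hL hL')
    fun x hx => ?_
  obtain ⟨U, hU, V', hV', hUx, hfUV', hV'V⟩ :=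
    exists_mem_compactOpen_closure_basis hB hB' hV (mem_compactOpen_iff.1 hf hx)
  have hUV'_open : IsOpen (compactOpen (closure U) V') :=
    TopologicalSpace.isOpen_generateFrom_of_mem ⟨U, hU, V', hV', rfl⟩
  exact ⟨closure U, mem_nhdsWithin_of_mem_nhds hUx,
    mem_of_superset (hUV'_open.mem_nhds hfUV') (compactOpen_anti le_rfl hV'V)⟩

end Cod

theorem stmt2_general (X : Type*) [TopologicalSpace X] [LocallyCompactSpace X] [T2Space X]
    (B : Set (Set X)) (hBbasis : TopologicalSpace.IsTopologicalBasis B) (hBc : B.Countable)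
    (hBrc : ∀ U ∈ B, IsCompact (closure U)) :
    ({S | ∃ U ∈ B, ∃ V ∈ B,
        S = {f : Cod X X | closure U ⊆ f.dom ∧ f.image (closure U) ⊆ V}} :
      Set (Set (Cod X X))).Countable ∧
    codCO X X = TopologicalSpace.generateFrom
      {S | ∃ U ∈ B, ∃ V ∈ B,
        S = {f : Cod X X | closure U ⊆ f.dom ∧ f.image (closure U) ⊆ V}} := by
  refine ⟨(hBc.image2 hBc fun U V => Cod.compactOpen (closure U) V).mono ?_,
    Cod.codCO_eq_generateFrom_closure_basis hBbasis hBrc hBbasis⟩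
  rintro S ⟨U, hU, V, hV, rfl⟩
  exact ⟨U, hU, V, hV, rfl⟩

/-- Given a countable basis `B` of relatively compact open sets closed under finite unions,
the family `{⟨cl U, V⟩ : U, V ∈ B}` is a countable subbasis for the compact-open topology
on `C_od(X,X)`. -/
theorem stmt2 (X : Type*) [TopologicalSpace X] [LocallyCompactSpace X] [T2Space X]
    [SecondCountableTopology X]
    (B : Set (Set X)) (hBbasis : TopologicalSpace.IsTopologicalBasis B) (hBc : B.Countable)
    (hBrc : ∀ U ∈ B, IsCompact (closure U))
    (hBu : ∀ U ∈ B, ∀ V ∈ B, U ∪ V ∈ B) :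
    ({S | ∃ U ∈ B, ∃ V ∈ B,
        S = {f : Cod X X | closure U ⊆ f.dom ∧ f.image (closure U) ⊆ V}} :
      Set (Set (Cod X X))).Countable ∧
    codCO X X = TopologicalSpace.generateFrom
      {S | ∃ U ∈ B, ∃ V ∈ B,
        S = {f : Cod X X | closure U ⊆ f.dom ∧ f.image (closure U) ⊆ V}} :=
  stmt2_general X B hBbasis hBc hBrc
end

section
/- If X is locally compact Hausdorff and second countable, and (Y,d) is a metric space, then the compact-open topology τ_co and the topology of compact convergence τ_cc coincide on the space of continuous partial functions from X to Y with open domain. -/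
open Set Topology Filter

/-- `dK f g K = sup_{x ∈ K} d (f x) (g x)` (meaningful when `K ⊆ dom f ∩ dom g`). -/
noncomputable def dK {X Y : Type*} [TopologicalSpace X] [MetricSpace Y]
    (f g : Cod X Y) (K : Set X) : ℝ :=
  sSup {r | ∃ (x : X) (hf : x ∈ f.dom) (hg : x ∈ g.dom), x ∈ K ∧
    r = dist (f.toFun ⟨x, hf⟩) (g.toFun ⟨x, hg⟩)}

/-- The basic set `B_K(f,ε)` of the topology of compact convergence. -/
def cball {X Y : Type*} [TopologicalSpace X] [MetricSpace Y]
    (f : Cod X Y) (K : Set X) (ε : ℝ) : Set (Cod X Y) :=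
  {g | K ⊆ g.dom ∧ dK f g K < ε}

/-- The topology of compact convergence on `Cod X Y`. -/
def tauCC (X Y : Type*) [TopologicalSpace X] [MetricSpace Y] : TopologicalSpace (Cod X Y) :=
  TopologicalSpace.generateFrom
    (insert Set.univ
      {S | ∃ (f : Cod X Y) (K : Set X) (ε : ℝ), K.Nonempty ∧ IsCompact K ∧ K ⊆ f.dom ∧
        0 < ε ∧ S = cball f K ε})

/-!
A basic set `B_K(f, ε)` contains a compact-open neighbourhood of each of its members `g`: cover
`K` by finitely many compact neighbourhoods `L_i ⊆ dom g` on which `g` oscillates by less than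
`η = (ε - sup_K d(f, g)) / 3` around `g(x_i)`; any `h` mapping each `L_i` into the `η`-ball around
`g(x_i)` is then `(sup_K d(f, g) + 2η)`-close to `f` on `K`. Conversely, if `g` maps the compact
set `K` into the open set `V`, then some `ε`-thickening of `g(K)` lies in `V`, so
`B_K(g, ε) ⊆ ⟨K, V⟩`.
-/

open Metric

namespace Cod

variable {X Y : Type*} [TopologicalSpace X] [TopologicalSpace Y]

theorem mem_image {f : Cod X Y} {K : Set X} {x : X} (hx : x ∈ K) (hxf : x ∈ f.dom) :
    f.toFun ⟨x, hxf⟩ ∈ f.image K :=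
  ⟨⟨x, hxf⟩, hx, rfl⟩

theorem isCompact_image {f : Cod X Y} {K : Set X} (hK : IsCompact K) (hKf : K ⊆ f.dom) :
    IsCompact (f.image K) :=
  ((IsInducing.subtypeVal.isCompact_preimage_iff (by rwa [Subtype.range_coe])).2 hK).image
    f.continuous_toFun

theorem exists_isCompact_mem_nhds_image_subset [LocallyCompactSpace X] (f : Cod X Y) {x : X}
    (hx : x ∈ f.dom) {V : Set Y} (hV : V ∈ 𝓝 (f.toFun ⟨x, hx⟩)) :
    ∃ L ∈ 𝓝 x, IsCompact L ∧ L ⊆ f.dom ∧ f.image L ⊆ V := by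
  have := f.isOpen_dom.locallyCompactSpace
  obtain ⟨L, hL, hLc, hLV⟩ := exists_mem_nhds_isCompact_mapsTo f.continuous_toFun hV
  refine ⟨(↑) '' L, f.isOpen_dom.isOpenEmbedding_subtypeVal.image_mem_nhds.2 hL,
    hLc.image continuous_subtype_val, Subtype.coe_image_subset _ _, ?_⟩
  rw [image, Subtype.val_injective.preimage_image]
  exact hLV.image_subset

end Cod

theorem isOpen_codCO_setOf_image_subset {X Y : Type*} [TopologicalSpace X] [TopologicalSpace Y]
    {K : Set X} {V : Set Y} (hK : IsCompact K) (hV : IsOpen V) :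
    IsOpen[codCO X Y] {f : Cod X Y | K ⊆ f.dom ∧ f.image K ⊆ V} :=
  TopologicalSpace.isOpen_generateFrom_of_mem ⟨K, V, hK, hV, rfl⟩

section CompactConvergence

variable {X Y : Type*} [TopologicalSpace X] [MetricSpace Y]

theorem dK_nonneg (f g : Cod X Y) (K : Set X) : 0 ≤ dK f g K :=
  Real.sSup_nonneg <| by
    rintro _ ⟨_, _, _, -, rfl⟩
    exact dist_nonneg

theorem dK_le {f g : Cod X Y} {K : Set X} {c : ℝ}
    (h : ∀ x (hxf : x ∈ f.dom) (hxg : x ∈ g.dom), x ∈ K →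
      dist (f.toFun ⟨x, hxf⟩) (g.toFun ⟨x, hxg⟩) ≤ c)
    (hc : 0 ≤ c) : dK f g K ≤ c :=
  Real.sSup_le (by rintro _ ⟨x, hxf, hxg, hx, rfl⟩; exact h x hxf hxg hx) hc

theorem dK_self (f : Cod X Y) (K : Set X) : dK f f K = 0 :=
  le_antisymm (dK_le (fun _ _ _ _ => (dist_self _).le) le_rfl) (dK_nonneg f f K)

theorem dist_le_dK {f g : Cod X Y} {K : Set X} (hK : IsCompact K) (hKf : K ⊆ f.dom)
    (hKg : K ⊆ g.dom) {x : X} (hx : x ∈ K) :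
    dist (f.toFun ⟨x, hKf hx⟩) (g.toFun ⟨x, hKg hx⟩) ≤ dK f g K := by
  have hbdd : Bornology.IsBounded (f.image K ∪ g.image K) :=
    ((Cod.isCompact_image hK hKf).union (Cod.isCompact_image hK hKg)).isBounded
  refine le_csSup ⟨diam (f.image K ∪ g.image K), ?_⟩ ⟨x, hKf hx, hKg hx, hx, rfl⟩
  rintro _ ⟨y, hyf, hyg, hy, rfl⟩
  exact dist_le_diam_of_mem hbdd (.inl (Cod.mem_image hy hyf)) (.inr (Cod.mem_image hy hyg))

theorem isOpen_tauCC_cball {f : Cod X Y} {K : Set X} {ε : ℝ} (hne : K.Nonempty)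
    (hK : IsCompact K) (hKf : K ⊆ f.dom) (hε : 0 < ε) : IsOpen[tauCC X Y] (cball f K ε) :=
  TopologicalSpace.isOpen_generateFrom_of_mem
    (mem_insert_of_mem _ ⟨f, K, ε, hne, hK, hKf, hε, rfl⟩)

theorem isOpen_tauCC_setOf_image_subset {K : Set X} {V : Set Y} (hK : IsCompact K)
    (hV : IsOpen V) : IsOpen[tauCC X Y] {f : Cod X Y | K ⊆ f.dom ∧ f.image K ⊆ V} := by
  let := tauCC X Y
  rcases K.eq_empty_or_nonempty with rfl | hne
  · simp [Cod.image]
  refine isOpen_iff_mem_nhds.2 ?_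
  rintro g ⟨hKg, hgV⟩
  obtain ⟨ε, hε, hεV⟩ := (Cod.isCompact_image hK hKg).exists_thickening_subset_open hV hgV
  have hball : cball g K ε ∈ 𝓝 g :=
    (isOpen_tauCC_cball hne hK hKg hε).mem_nhds
      ⟨hKg, (dK_self g K).trans_lt hε⟩
  refine mem_of_superset hball ?_
  rintro h ⟨hKh, hgh⟩
  refine ⟨hKh, ?_⟩
  rintro _ ⟨⟨x, hxh⟩, (hx : x ∈ K), rfl⟩
  refine hεV (mem_thickening_iff.2 ⟨_, Cod.mem_image hx (hKg hx), ?_⟩)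
  rw [dist_comm]
  exact (dist_le_dK hK hKg hKh hx).trans_lt hgh

theorem isOpen_codCO_cball [LocallyCompactSpace X] {f : Cod X Y} {K : Set X} {ε : ℝ}
    (hK : IsCompact K) (hKf : K ⊆ f.dom) : IsOpen[codCO X Y] (cball f K ε) := by
  let := codCO X Y
  refine isOpen_iff_mem_nhds.2 ?_
  rintro g ⟨hKg, hfg⟩
  obtain ⟨η, hη, hηε⟩ : ∃ η, 0 < η ∧ dK f g K + 2 * η < ε :=
    ⟨(ε - dK f g K) / 3, by linarith, by linarith⟩
  have hL : ∀ x (hx : x ∈ K), ∃ L ∈ 𝓝 x, IsCompact L ∧ L ⊆ g.dom ∧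
      g.image L ⊆ ball (g.toFun ⟨x, hKg hx⟩) η :=
    fun x hx => g.exists_isCompact_mem_nhds_image_subset (hKg hx) (ball_mem_nhds _ hη)
  choose L hLx hLc hLg hLball using hL
  obtain ⟨t, hKt⟩ := hK.elim_nhds_subcover' L hLx
  have hN : ⋂ i ∈ t, {h : Cod X Y | L i i.2 ⊆ h.dom ∧
      h.image (L i i.2) ⊆ ball (g.toFun ⟨i, hKg i.2⟩) η} ∈ 𝓝 g :=
    (biInter_finset_mem t).2 fun i _ =>
      (isOpen_codCO_setOf_image_subset (hLc i i.2) isOpen_ball).mem_nhds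
        ⟨hLg i i.2, hLball i i.2⟩
  refine mem_of_superset hN fun h hh => ?_
  simp only [mem_iInter] at hh
  have hKh : K ⊆ h.dom := fun x hx => by
    obtain ⟨i, hi, hxi⟩ := mem_iUnion₂.1 (hKt hx)
    exact (hh i hi).1 hxi
  suffices hbound : dK f h K ≤ dK f g K + 2 * η from ⟨hKh, hbound.trans_lt hηε⟩
  refine dK_le (fun x hxf hxh hx => ?_) (by linarith [dK_nonneg f g K])
  obtain ⟨i, hi, hxi⟩ := mem_iUnion₂.1 (hKt hx)
  have hgx : dist (g.toFun ⟨x, hKg hx⟩) (g.toFun ⟨i, hKg i.2⟩) < η :=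
    hLball i i.2 (Cod.mem_image hxi (hKg hx))
  have hhx : dist (h.toFun ⟨x, hxh⟩) (g.toFun ⟨i, hKg i.2⟩) < η :=
    (hh i hi).2 (Cod.mem_image hxi hxh)
  calc dist (f.toFun ⟨x, hxf⟩) (h.toFun ⟨x, hxh⟩)
      ≤ dist (f.toFun ⟨x, hxf⟩) (g.toFun ⟨x, hKg hx⟩) + dist (h.toFun ⟨x, hxh⟩)
          (g.toFun ⟨i, hKg i.2⟩) + dist (g.toFun ⟨x, hKg hx⟩) (g.toFun ⟨i, hKg i.2⟩) :=
        dist_triangle4_right _ _ _ _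
    _ ≤ dK f g K + 2 * η := by linarith [dist_le_dK hK hKf hKg hx]

theorem codCO_le_tauCC [LocallyCompactSpace X] : codCO X Y ≤ tauCC X Y := by
  refine le_generateFrom ?_
  rintro _ (rfl | ⟨f, K, ε, -, hK, hKf, -, rfl⟩)
  exacts [(codCO X Y).isOpen_univ, isOpen_codCO_cball hK hKf]

theorem tauCC_le_codCO : tauCC X Y ≤ codCO X Y := by
  refine le_generateFrom ?_
  rintro _ ⟨K, V, hK, hV, rfl⟩
  exact isOpen_tauCC_setOf_image_subset hK hV

end CompactConvergence

theorem stmt7_general (X Y : Type*) [TopologicalSpace X] [LocallyCompactSpace X]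
    [MetricSpace Y] :
    codCO X Y = tauCC X Y :=
  le_antisymm codCO_le_tauCC tauCC_le_codCO

/-- If `X` is locally compact Hausdorff second countable and `Y` is a metric space, then the
compact-open topology and the topology of compact convergence coincide on `C_od(X,Y)`. -/
theorem stmt7 (X Y : Type*) [TopologicalSpace X] [LocallyCompactSpace X] [T2Space X]
    [SecondCountableTopology X] [MetricSpace Y] :
    codCO X Y = tauCC X Y :=
  stmt7_general X Y
end
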